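/- The 6-vertex triangulation RP²₆ of the real projective plane (the quotient of the boundary of the icosahedron by the antipodal map) admits a discrete Morse matching with exactly 3 critical cells, one in each dimension 0, 1, 2, and this is optimal: no discrete Morse matching on RP²₆ has fewer than 3 critical cells. -/

import Mathlib

open Finset
set_option linter.unusedSectionVars false

variable {V : Type*} [DecidableEq V]


/-- A (finite abstract) simplicial complex, given by its finset of faces:
all faces are nonempty and the collection is closed under nonempty subsets. -/
def IsComplex (S : Finset (Finset V)) : Prop :=
  ∀ F ∈ S, F.Nonempty ∧ ∀ G ⊆ F, G.Nonempty → G ∈ S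

/-- `σ` is a free face of `S`: it is properly contained in exactly one face `τ`,
which is moreover a facet. -/
def IsFreePair (S : Finset (Finset V)) (σ τ : Finset V) : Prop :=
  σ ∈ S ∧ τ ∈ S ∧ σ ⊂ τ ∧ (∀ ρ ∈ S, σ ⊂ ρ → ρ = τ) ∧ ∀ ρ ∈ S, ¬ τ ⊂ ρ

/-- `Collapses S T`: `S` reduces to `T` by a finite sequence of elementary collapses,
each removing a free face together with the unique facet containing it. -/
inductive Collapses : Finset (Finset V) → Finset (Finset V) → Prop
  | refl (S : Finset (Finset V)) : Collapses S S
  | step {S T : Finset (Finset V)} (σ τ : Finset V) :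
      IsFreePair S σ τ → Collapses (S \ {σ, τ}) T → Collapses S T

/-- A complex is collapsible if it collapses to a single vertex. -/
def Collapsible (S : Finset (Finset V)) : Prop :=
  ∃ v : V, Collapses S {({v} : Finset V)}

/-- A discrete Morse matching: an acyclic partial matching on the Hasse diagram
of `S`, pairing faces whose dimensions differ by one. -/
structure MorseMatching (S : Finset (Finset V)) where
  M : Finset (Finset V × Finset V)
  mem_left : ∀ p ∈ M, p.1 ∈ S
  mem_right : ∀ p ∈ M, p.2 ∈ S
  cover : ∀ p ∈ M, p.1 ⊂ p.2 ∧ p.2.card = p.1.card + 1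
  matching : ∀ p ∈ M, ∀ q ∈ M, p ≠ q →
    p.1 ≠ q.1 ∧ p.2 ≠ q.2 ∧ p.1 ≠ q.2 ∧ p.2 ≠ q.1
  /-- The modified Hasse diagram (matched pairs pointing up, unmatched cover
  relations pointing down) has no directed cycle. -/
  acyclic : ∀ σ : Finset V, ¬ Relation.TransGen
      (fun x y => (x, y) ∈ M ∨
        ((y, x) ∉ M ∧ y ⊂ x ∧ x.card = y.card + 1 ∧ x ∈ S ∧ y ∈ S)) σ σ

/-- A face is critical for a matching if it is unmatched. -/
def MorseMatching.Critical {S : Finset (Finset V)} (mm : MorseMatching S)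
    (F : Finset V) : Prop :=
  F ∈ S ∧ ∀ p ∈ mm.M, p.1 ≠ F ∧ p.2 ≠ F

open scoped Classical in
/-- The finset of critical (unmatched) cells of a matching. -/
noncomputable def MorseMatching.criticalCells {S : Finset (Finset V)}
    (mm : MorseMatching S) : Finset (Finset V) :=
  S.filter fun F => ∀ p ∈ mm.M, p.1 ≠ F ∧ p.2 ≠ F

open scoped Classical in
/-- `c_i`: the number of critical `i`-dimensional cells. -/
noncomputable def MorseMatching.critCount {S : Finset (Finset V)}
    (mm : MorseMatching S) (i : ℕ) : ℕ :=
  (mm.criticalCells.filter fun F => F.card = i + 1).card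

/-- The ten facets of the 6-vertex triangulation of the real projective plane. -/
def RP26facets : Finset (Finset (Fin 6)) :=
  { {0, 1, 2}, {0, 1, 4}, {0, 2, 3}, {0, 3, 5}, {0, 4, 5},
    {1, 2, 5}, {1, 3, 4}, {1, 3, 5}, {2, 3, 4}, {2, 4, 5} }

/-- The 6-vertex triangulation `RP²₆` of the real projective plane. -/
def RP26 : Finset (Finset (Fin 6)) :=
  (RP26facets.biUnion fun F => F.powerset).filter fun F => F.Nonempty

/-! The explicit matching pairs each vertex `v ≠ 5` with the edge `v5` and nine edges with
triangles, leaving `5`, `34` and `012` critical; a potential that strictly decreases along the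
modified Hasse diagram certifies acyclicity.

Optimality: if every vertex were matched, going up along the matched edge and down to its other
endpoint would never stop, giving a cycle; dually, since every edge of `RP²₆` lies in two
triangles, if every triangle were matched, going down to the matched edge and up into the other
triangle through it would give a cycle. So some vertex and some triangle are critical, and as
matched cells come in pairs, the number of critical cells has the parity of `#RP²₆ = 31`. -/

theorem Relation.exists_transGen_self_of_forall_exists {α : Type*} {r : α → α → Prop}
    (s : Finset α) (hs : s.Nonempty) (h : ∀ a ∈ s, ∃ b ∈ s, Relation.TransGen r a b) :
    ∃ a, Relation.TransGen r a a := by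
  by_contra! hacyclic
  let R : s → s → Prop := fun a b => Relation.TransGen r b a
  have : IsTrans s R := ⟨fun _ _ _ hab hbc => hbc.trans hab⟩
  have : Std.Irrefl R := ⟨fun a => hacyclic a⟩
  obtain ⟨m, -, hmin⟩ := (Finite.wellFounded_of_trans_of_irrefl R).has_min Set.univ
    ⟨⟨_, hs.choose_spec⟩, trivial⟩
  obtain ⟨b, hb, hmb⟩ := h m m.2
  exact hmin ⟨b, hb⟩ trivial hmb

theorem List.matching_of_nodup {α : Type*} {l : List (α × α)}
    (h : (l.map Prod.fst ++ l.map Prod.snd).Nodup) :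
    ∀ p ∈ l, ∀ q ∈ l, p ≠ q → p.1 ≠ q.1 ∧ p.2 ≠ q.2 ∧ p.1 ≠ q.2 ∧ p.2 ≠ q.1 := by
  obtain ⟨hfst, hsnd, hdisj⟩ := List.nodup_append.1 h
  intro p hp q hq hpq
  refine ⟨fun h => hpq (List.inj_on_of_nodup_map hfst hp hq h),
    fun h => hpq (List.inj_on_of_nodup_map hsnd hp hq h), fun h => ?_, fun h => ?_⟩
  · exact hdisj _ (List.mem_map_of_mem hp) _ (List.mem_map_of_mem hq) h
  · exact hdisj _ (List.mem_map_of_mem hq) _ (List.mem_map_of_mem hp) h.symm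

theorem isComplex_biUnion_powerset (facets : Finset (Finset V)) :
    IsComplex ((facets.biUnion fun F => F.powerset).filter fun F => F.Nonempty) := by
  intro F hF
  simp only [mem_filter, mem_biUnion, mem_powerset] at hF ⊢
  obtain ⟨⟨t, ht, hFt⟩, hne⟩ := hF
  exact ⟨hne, fun G hGF hG => ⟨⟨t, ht, hGF.trans hFt⟩, hG⟩⟩

def HasseArrow (S : Finset (Finset V)) (M : Finset (Finset V × Finset V)) (x y : Finset V) :
    Prop :=
  (x, y) ∈ M ∨ ((y, x) ∉ M ∧ y ⊂ x ∧ x.card = y.card + 1 ∧ x ∈ S ∧ y ∈ S)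

theorem not_transGen_hasseArrow_of_potential {S : Finset (Finset V)}
    {M : Finset (Finset V × Finset V)} (f : Finset V → ℕ) (hup : ∀ p ∈ M, f p.2 < f p.1)
    (hdown : ∀ x ∈ S, ∀ y ∈ S, y ⊂ x → x.card = y.card + 1 → (y, x) ∉ M → f y < f x)
    (σ : Finset V) : ¬ Relation.TransGen (HasseArrow S M) σ σ := by
  intro hcycle
  have hlt : Relation.TransGen (fun a b : ℕ => b < a) (f σ) (f σ) := by
    refine hcycle.lift f ?_
    rintro x y (hxy | ⟨hyx, hsub, hcard, hx, hy⟩)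
    exacts [hup _ hxy, hdown x hx y hy hsub hcard hyx]
  rw [Relation.transGen_eq_self] at hlt
  exact lt_irrefl _ hlt

namespace MorseMatching

variable {S : Finset (Finset V)} (mm : MorseMatching S)

theorem mem_criticalCells {F : Finset V} : F ∈ mm.criticalCells ↔ mm.Critical F := by
  classical
  simp [criticalCells, Critical]

theorem not_transGen_hasseArrow (σ : Finset V) :
    ¬ Relation.TransGen (HasseArrow S mm.M) σ σ :=
  mm.acyclic σ

theorem eq_of_fst_eq {p q : Finset V × Finset V} (hp : p ∈ mm.M) (hq : q ∈ mm.M)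
    (h : p.1 = q.1) : p = q := by
  by_contra hne
  exact (mm.matching p hp q hq hne).1 h

theorem eq_of_snd_eq {p q : Finset V × Finset V} (hp : p ∈ mm.M) (hq : q ∈ mm.M)
    (h : p.2 = q.2) : p = q := by
  by_contra hne
  exact (mm.matching p hp q hq hne).2.1 h

def matchedCells : Finset (Finset V) :=
  mm.M.image Prod.fst ∪ mm.M.image Prod.snd

theorem card_matchedCells : mm.matchedCells.card = 2 * mm.M.card := by
  have hdisj : Disjoint (mm.M.image Prod.fst) (mm.M.image Prod.snd) := by
    rw [disjoint_left]
    rintro F hF1 hF2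
    obtain ⟨p, hp, rfl⟩ := mem_image.mp hF1
    obtain ⟨q, hq, hqp⟩ := mem_image.mp hF2
    by_cases hpq : q = p
    · subst hpq
      have := (mm.cover q hq).2
      rw [hqp] at this
      omega
    · exact (mm.matching q hq p hp hpq).2.2.2 hqp
  rw [matchedCells, card_union_of_disjoint hdisj,
    card_image_of_injOn fun p hp q hq => mm.eq_of_fst_eq hp hq,
    card_image_of_injOn fun p hp q hq => mm.eq_of_snd_eq hp hq]
  ring

theorem criticalCells_eq_sdiff : mm.criticalCells = S \ mm.matchedCells := by
  ext F
  simp only [mem_criticalCells, Critical, matchedCells, mem_sdiff, mem_union, mem_image]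
  grind

theorem card_criticalCells_add_two_mul : mm.criticalCells.card + 2 * mm.M.card = S.card := by
  have hsub : mm.matchedCells ⊆ S := by
    simp only [matchedCells, union_subset_iff, image_subset_iff]
    exact ⟨mm.mem_left, mm.mem_right⟩
  rw [criticalCells_eq_sdiff, card_sdiff_of_subset hsub, ← card_matchedCells]
  have := card_le_card hsub
  omega

theorem exists_mem_of_not_critical {F : Finset V} (hF : F ∈ S) (h : ¬ mm.Critical F) :
    ∃ p ∈ mm.M, p.1 = F ∨ p.2 = F := by
  simp only [Critical, hF, true_and, not_forall, not_and_or, not_not] at h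
  obtain ⟨p, hp, h⟩ := h
  exact ⟨p, hp, h⟩

theorem hasseArrow_of_mem {p : Finset V × Finset V} (hp : p ∈ mm.M) :
    HasseArrow S mm.M p.1 p.2 :=
  Or.inl hp

theorem exists_critical_vertex (hS : IsComplex S) {v : V} (hv : {v} ∈ S) :
    ∃ F ∈ mm.criticalCells, F.card = 1 := by
  by_contra! hmatched
  have step : ∀ a ∈ S.filter (·.card = 1), ∃ b ∈ S.filter (·.card = 1),
      Relation.TransGen (HasseArrow S mm.M) a b := by
    intro a ha
    rw [mem_filter] at ha
    obtain ⟨p, hp, hpa'⟩ := mm.exists_mem_of_not_critical ha.1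
      fun hcrit => hmatched a (mm.mem_criticalCells.2 hcrit) ha.2
    obtain ⟨hsub, hcard⟩ := mm.cover p hp
    have hpa : p.1 = a := by
      refine hpa'.resolve_right fun h2 => ?_
      rw [h2, ha.2] at hcard
      have h1 : p.1 = ∅ := card_eq_zero.1 (by omega)
      exact not_nonempty_empty (h1 ▸ (hS _ (mm.mem_left p hp)).1)
    obtain ⟨w, hw, hwa⟩ := exists_of_ssubset hsub
    have hw2 : p.2.card = ({w} : Finset V).card + 1 := by
      rw [card_singleton, hcard, hpa, ha.2]
    have hwS : {w} ∈ S :=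
      (hS _ (mm.mem_right p hp)).2 _ (singleton_subset_iff.2 hw) (singleton_nonempty w)
    rw [← hpa]
    refine ⟨{w}, mem_filter.2 ⟨hwS, card_singleton w⟩,
      .tail (.single (mm.hasseArrow_of_mem hp)) ?_⟩
    refine Or.inr ⟨fun hwp => ?_, ?_, hw2, mm.mem_right p hp, hwS⟩
    · have := congrArg Prod.fst (mm.eq_of_snd_eq hp hwp rfl)
      exact hwa (by rw [this]; exact mem_singleton_self w)
    · refine ssubset_of_subset_of_ne (singleton_subset_iff.2 hw) fun h => ?_
      rw [← h] at hw2
      omega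
  obtain ⟨a, ha⟩ := Relation.exists_transGen_self_of_forall_exists _
    ⟨{v}, mem_filter.2 ⟨hv, card_singleton v⟩⟩ step
  exact mm.not_transGen_hasseArrow a ha

theorem exists_critical_top (d : ℕ) (hdim : ∀ F ∈ S, F.card ≤ d + 1) {t : Finset V}
    (ht : t ∈ S) (htd : t.card = d + 1)
    (hpseudo : ∀ t ∈ S, ∀ σ ∈ S, σ ⊂ t → t.card = d + 1 → σ.card = d →
      ∃ t' ∈ S, σ ⊂ t' ∧ t' ≠ t) :
    ∃ F ∈ mm.criticalCells, F.card = d + 1 := by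
  by_contra! hmatched
  have step : ∀ a ∈ S.filter (·.card = d + 1), ∃ b ∈ S.filter (·.card = d + 1),
      Relation.TransGen (Function.swap (HasseArrow S mm.M)) a b := by
    intro a ha
    rw [mem_filter] at ha
    obtain ⟨p, hp, hpa'⟩ := mm.exists_mem_of_not_critical ha.1
      fun hcrit => hmatched a (mm.mem_criticalCells.2 hcrit) ha.2
    obtain ⟨hsub, hcard⟩ := mm.cover p hp
    have hpa : p.2 = a := by
      refine hpa'.resolve_left fun h1 => ?_
      have := hdim _ (mm.mem_right p hp)
      rw [h1] at hcard
      omega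
    have hup : HasseArrow S mm.M p.1 a := hpa ▸ mm.hasseArrow_of_mem hp
    rw [hpa] at hsub hcard
    obtain ⟨b, hbS, hsubb, hba⟩ :=
      hpseudo a ha.1 p.1 (mm.mem_left p hp) hsub ha.2 (by omega)
    have hbd : b.card = d + 1 :=
      le_antisymm (hdim b hbS) (by have := card_lt_card hsubb; omega)
    refine ⟨b, mem_filter.2 ⟨hbS, hbd⟩, Relation.transGen_swap.2 (.tail (.single ?_) hup)⟩
    refine Or.inr ⟨fun hpb => hba ?_, hsubb, by omega, hbS, mm.mem_left p hp⟩
    rw [← hpa]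
    exact (congrArg Prod.snd (mm.eq_of_fst_eq hp hpb rfl)).symm
  obtain ⟨a, ha⟩ := Relation.exists_transGen_self_of_forall_exists _
    ⟨t, mem_filter.2 ⟨ht, htd⟩⟩ step
  exact mm.not_transGen_hasseArrow a (Relation.transGen_swap.1 ha)

end MorseMatching

section RP26

set_option maxRecDepth 10000

/-- The faces of `RP26`, listed so that every arrow of the modified Hasse diagram of
`rp26Matching` below points to an earlier face. -/
def rp26Faces : List (Finset (Fin 6)) :=
  [{5}, {4, 5}, {0, 5}, {3, 5}, {1, 5}, {2, 5}, {4}, {0}, {0, 4, 5}, {3}, {0, 3, 5}, {1},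
    {1, 3, 5}, {2}, {1, 2, 5}, {2, 4, 5}, {0, 4}, {3, 4}, {0, 3}, {1, 3}, {1, 2}, {2, 4},
    {1, 3, 4}, {2, 3, 4}, {1, 4}, {2, 3}, {0, 1, 4}, {0, 2, 3}, {0, 1}, {0, 2}, {0, 1, 2}]

theorem RP26_eq_toFinset_rp26Faces : RP26 = rp26Faces.toFinset := by
  decide +kernel

theorem mem_RP26 {F : Finset (Fin 6)} : F ∈ RP26 ↔ F ∈ rp26Faces := by
  rw [RP26_eq_toFinset_rp26Faces, List.mem_toFinset]

theorem isComplex_RP26 : IsComplex RP26 :=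
  isComplex_biUnion_powerset _

theorem card_RP26 : RP26.card = 31 := by
  decide +kernel

theorem card_le_three_of_mem_RP26 : ∀ F ∈ RP26, F.card ≤ 3 := by
  simp only [mem_RP26]
  decide +kernel

theorem exists_other_triangle_RP26 : ∀ t ∈ RP26, ∀ σ ∈ RP26, σ ⊂ t → t.card = 3 →
    σ.card = 2 → ∃ t' ∈ RP26, σ ⊂ t' ∧ t' ≠ t := by
  simp only [mem_RP26]
  decide +kernel

theorem MorseMatching.three_le_card_criticalCells_RP26 (mm : MorseMatching RP26) :
    3 ≤ mm.criticalCells.card := by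
  obtain ⟨F₀, hF₀, hF₀card⟩ := mm.exists_critical_vertex isComplex_RP26 (v := 0) (by decide)
  obtain ⟨F₂, hF₂, hF₂card⟩ := mm.exists_critical_top 2 card_le_three_of_mem_RP26
    (t := {0, 1, 2}) (by decide) rfl exists_other_triangle_RP26
  have htwo : 2 ≤ mm.criticalCells.card := by
    rw [← card_pair (a := F₀) (b := F₂) (by rintro rfl; omega)]
    exact card_le_card (insert_subset_iff.2 ⟨hF₀, singleton_subset_iff.2 hF₂⟩)
  have hparity := mm.card_criticalCells_add_two_mul
  rw [card_RP26] at hparity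
  omega

def rp26Pairs : List (Finset (Fin 6) × Finset (Fin 6)) :=
  [ ({0}, {0, 5}), ({1}, {1, 5}), ({2}, {2, 5}), ({3}, {3, 5}), ({4}, {4, 5}),
    ({0, 1}, {0, 1, 4}), ({0, 2}, {0, 2, 3}), ({0, 3}, {0, 3, 5}), ({0, 4}, {0, 4, 5}),
    ({1, 2}, {1, 2, 5}), ({1, 3}, {1, 3, 5}), ({1, 4}, {1, 3, 4}), ({2, 3}, {2, 3, 4}),
    ({2, 4}, {2, 4, 5}) ]

theorem nodup_rp26Pairs_cells : (rp26Pairs.map Prod.fst ++ rp26Pairs.map Prod.snd).Nodup := by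
  decide +kernel

def rp26Matching : Finset (Finset (Fin 6) × Finset (Fin 6)) :=
  ⟨rp26Pairs, (List.nodup_append.1 nodup_rp26Pairs_cells).1.of_map _⟩

theorem rp26Pairs_mem_RP26 : ∀ p ∈ rp26Pairs, p.1 ∈ RP26 ∧ p.2 ∈ RP26 := by
  simp only [mem_RP26]
  decide +kernel

theorem rp26Pairs_cover :
    ∀ p ∈ rp26Pairs, p.1 ⊂ p.2 ∧ p.2.card = p.1.card + 1 := by
  decide +kernel

theorem rp26Pairs_up :
    ∀ p ∈ rp26Pairs, rp26Faces.idxOf p.2 < rp26Faces.idxOf p.1 := by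
  decide +kernel

theorem rp26Pairs_down : ∀ x ∈ RP26, ∀ y ∈ RP26, y ⊂ x → x.card = y.card + 1 →
    (y, x) ∉ rp26Pairs → rp26Faces.idxOf y < rp26Faces.idxOf x := by
  simp only [mem_RP26]
  decide +kernel

def rp26Morse : MorseMatching RP26 where
  M := rp26Matching
  mem_left p hp := (rp26Pairs_mem_RP26 p hp).1
  mem_right p hp := (rp26Pairs_mem_RP26 p hp).2
  cover := rp26Pairs_cover
  matching := List.matching_of_nodup nodup_rp26Pairs_cells
  acyclic := not_transGen_hasseArrow_of_potential rp26Faces.idxOf rp26Pairs_up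
    rp26Pairs_down

theorem criticalCells_rp26Morse : rp26Morse.criticalCells = {{5}, {3, 4}, {0, 1, 2}} := by
  rw [MorseMatching.criticalCells_eq_sdiff]
  show RP26 \ (rp26Matching.image Prod.fst ∪ rp26Matching.image Prod.snd) = _
  rw [RP26_eq_toFinset_rp26Faces]
  decide +kernel

end RP26

/-- `RP²₆` admits a discrete Morse matching with exactly three
critical cells, one in each dimension 0, 1, 2, and no discrete Morse matching
on `RP²₆` has fewer than 3 critical cells. -/
theorem stmt15 :
    (∃ mm : MorseMatching RP26, mm.critCount 0 = 1 ∧ mm.critCount 1 = 1 ∧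
      mm.critCount 2 = 1 ∧ mm.criticalCells.card = 3) ∧
    (∀ mm : MorseMatching RP26, 3 ≤ mm.criticalCells.card) := by
  refine ⟨⟨rp26Morse, ?_⟩, MorseMatching.three_le_card_criticalCells_RP26⟩
  simp only [MorseMatching.critCount, criticalCells_rp26Morse]
  decide
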